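/- Let N ≥ 2 and let A be the matrix with entries A_{B,X} = (-1)^{|B ∩ X|}, where B ranges over nonempty subsets of {2,...,N} and X over even-cardinality subsets of [N] with |X| ≥ 2. Then for any two distinct columns X ≠ Y, the Hamming distance between the columns A_{·,X} and A_{·,Y} (the number of row indices B where they differ) equals 2^{N-2}. -/

import Mathlib

/-!
Columns `X` and `Y` differ in row `B` exactly when `|B ∩ (X ∆ Y)|` is odd. Since `|X|` and
`|Y|` are even and `X ≠ Y`, the set `X ∆ Y` has even positive size, so it contains an element
`a ≠ 1`. Toggling `a` in `B` is an involution of the subsets of `{2, …, N}` exchanging odd and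
even intersections with `X ∆ Y`, so exactly half of the `2^(N-1)` rows qualify.
-/

open Finset
open scoped symmDiff

theorem neg_one_pow_eq_neg_one_pow_iff {R : Type*} [Monoid R] [HasDistribNeg R]
    (h : (-1 : R) ≠ 1) {m n : ℕ} : (-1 : R) ^ m = (-1) ^ n ↔ (Even m ↔ Even n) := by
  simp only [neg_one_pow_eq_ite]
  split_ifs <;> simp_all [h.symm, -Nat.not_even_iff_odd]

namespace Finset

variable {α : Type*} [DecidableEq α]

theorem card_symmDiff_add_two_mul_card_inter (s t : Finset α) :
    #(s ∆ t) + 2 * #(s ∩ t) = #s + #t := by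
  rw [Finset.symmDiff_def, card_union_of_disjoint disjoint_sdiff_sdiff]
  have hs := card_sdiff_add_card_inter s t
  have ht := card_sdiff_add_card_inter t s
  rw [inter_comm] at ht
  omega

theorem even_card_symmDiff_iff (s t : Finset α) :
    Even #(s ∆ t) ↔ (Even #s ↔ Even #t) := by
  rw [← Nat.even_add, ← card_symmDiff_add_two_mul_card_inter, Nat.even_add]
  simp

theorem card_filter_odd_card_inter_powerset {u s : Finset α} {a : α} (hau : a ∈ u)
    (has : a ∈ s) :
    #{B ∈ u.powerset | Odd #(B ∩ s)} = 2 ^ (#u - 1) := by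
  have hflip (B : Finset α) : Odd #((B ∆ {a}) ∩ s) ↔ ¬Odd #(B ∩ s) := by
    rw [← inf_eq_inter, inf_symmDiff_distrib_right, inf_eq_inter, inf_eq_inter,
      singleton_inter_of_mem has, ← Nat.not_even_iff_odd,
      ← Nat.not_even_iff_odd, even_card_symmDiff_iff]
    simp
  have hmaps (B : Finset α) (hB : B ⊆ u) : B ∆ {a} ⊆ u :=
    symmDiff_subset_union.trans (union_subset hB (singleton_subset_iff.2 hau))
  have hswap :
      #{B ∈ u.powerset | Odd #(B ∩ s)} = #{B ∈ u.powerset | ¬Odd #(B ∩ s)} := by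
    refine card_nbij' (· ∆ {a}) (· ∆ {a}) ?_ ?_ ?_ ?_ <;> intro B hB
    · simp only [coe_filter, mem_powerset, Set.mem_ofPred_eq] at hB ⊢
      exact ⟨hmaps B hB.1, by rw [hflip, not_not]; exact hB.2⟩
    · simp only [coe_filter, mem_powerset, Set.mem_ofPred_eq] at hB ⊢
      exact ⟨hmaps B hB.1, (hflip B).2 hB.2⟩
    · exact symmDiff_symmDiff_cancel_right _ _
    · exact symmDiff_symmDiff_cancel_right _ _
  have htotal := card_filter_add_card_filter_not (s := u.powerset) (fun B => Odd #(B ∩ s))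
  rw [card_powerset, ← hswap, ← Nat.sub_one_add_one (card_ne_zero_of_mem hau), pow_succ]
    at htotal
  omega

theorem neg_one_pow_card_inter_ne_iff (B X Y : Finset α) :
    (-1 : ℤ) ^ #(B ∩ X) ≠ (-1) ^ #(B ∩ Y) ↔ Odd #(B ∩ (X ∆ Y)) := by
  rw [show B ∩ X ∆ Y = (B ∩ X) ∆ (B ∩ Y) from inf_symmDiff_distrib_left B X Y,
    ← Nat.not_even_iff_odd, even_card_symmDiff_iff, Ne,
    neg_one_pow_eq_neg_one_pow_iff (by decide)]

end Finset

/-- For `N ≥ 2` and distinct even-cardinality subsets `X ≠ Y` of `[N]` with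
`|X|, |Y| ≥ 2`, the Hamming distance between columns `A_{·,X}` and `A_{·,Y}` of the
sign matrix `A_{B,X} = (-1)^{|B ∩ X|}` (rows: nonempty `B ⊆ [N] \ {1}`) is `2^(N-2)`. -/
theorem hamming_distance_columns (N : ℕ) (hN : 2 ≤ N) (X Y : Finset (Fin N))
    (hX : Even X.card)
    (hY : Even Y.card) (hne : X ≠ Y) :
    ((Finset.univ.erase (⟨0, by omega⟩ : Fin N)).powerset.filter
        (fun B => B.Nonempty ∧
          (-1 : ℤ) ^ (B ∩ X).card ≠ (-1 : ℤ) ^ (B ∩ Y).card)).card = 2 ^ (N - 2) := by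
  have hXY : 1 < #(X ∆ Y) := by
    have heven : Even #(X ∆ Y) := (even_card_symmDiff_iff X Y).2 (iff_of_true hX hY)
    have hpos : 0 < #(X ∆ Y) := card_pos.2 (symmDiff_nonempty.2 hne)
    grind
  obtain ⟨a, haXY, ha0⟩ := exists_mem_ne hXY ⟨0, by omega⟩
  have hrows : ∀ B ∈ (univ.erase (⟨0, by omega⟩ : Fin N)).powerset,
      (B.Nonempty ∧ (-1 : ℤ) ^ #(B ∩ X) ≠ (-1) ^ #(B ∩ Y)) ↔ Odd #(B ∩ (X ∆ Y)) := by
    intro B _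
    rw [neg_one_pow_card_inter_ne_iff, and_iff_right_of_imp]
    exact fun hodd => (card_pos.1 hodd.pos).mono inter_subset_left
  rw [filter_congr hrows,
    card_filter_odd_card_inter_powerset (mem_erase.2 ⟨ha0, mem_univ a⟩) haXY,
    card_erase_of_mem (mem_univ _), card_univ, Fintype.card_fin, Nat.sub_sub]
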